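/- arXiv:1905.09635 — 3 statements merged into one kernel-verified Lean document; each statement's English description precedes it below -/
import Mathlib

section
/- Let N ≥ 2, M ≥ 1, and J_1, …, J_N be positive integers with J_i ≤ M for each i. Consider the parameter space consisting of a core tensor G ∈ ℝ^{J_1 × ⋯ × J_N} together with factor matrices U^(i) ∈ ℝ^{M × J_i} (i = 1, …, N), identified with a Euclidean space, and equip it with Lebesgue measure. Let r = max over all partitions of {1,…,N} into nonempty disjoint sets p = {p_1,…,p_{n_1}} and q = {q_1,…,q_{n_2}} of min(J_{p_1}⋯J_{p_{n_1}}, J_{q_1}⋯J_{q_{n_2}}). Then for Lebesgue-almost every choice of parameters, the order-N tensor A defined by A_{d_1,…,d_N} = Σ_{j_1,…,j_N} G_{j_1,…,j_N} U^(1)_{d_1,j_1} ⋯ U^(N)_{d_N,j_N} has CP rank at least r; i.e., the set of parameter configurations for which the CP rank of A is less than r has Lebesgue measure zero. -/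
/-! A CP decomposition of `A` with `Z` terms factors every flattening of `A` (modes in `p` as rows,
the others as columns) through `ℝ^Z`, so all its `r × r` minors vanish once `cpRank A < r`.
For a Tucker tensor such a minor is a polynomial in the parameters, and it is not the zero
polynomial: with the inclusion matrices `ℝ^{J i} → ℝ^M` as factors and a core whose flattening is
a partial identity, the minor is the identity matrix. The zero set of a nonzero polynomial is
Lebesgue-null, and `cpRank < r` means `cpRank` lies below the bound of one of finitely many
partitions. -/

open MeasureTheory Finset

/-- `A` admits a CP representation with `Z` terms. -/
def IsCPRepr {N M : ℕ} (A : (Fin N → Fin M) → ℝ) (Z : ℕ) : Prop :=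
  ∃ (lam : Fin Z → ℝ) (a : Fin Z → Fin N → Fin M → ℝ),
    ∀ d : Fin N → Fin M, A d = ∑ z, lam z * ∏ i, a z i (d i)

/-- The CP rank of a tensor: the minimal number of rank-one terms. -/
noncomputable def cpRank {N M : ℕ} (A : (Fin N → Fin M) → ℝ) : ℕ :=
  sInf {Z | IsCPRepr A Z}

/-- The order-`N` tensor of dimension `M` in each mode obtained from the Tucker format with
core `G` and factor matrices `U i : Fin M → Fin (J i) → ℝ`. -/
def tuckerTensor {N M : ℕ} (J : Fin N → ℕ)
    (G : (∀ i, Fin (J i)) → ℝ) (U : ∀ i : Fin N, Fin M → Fin (J i) → ℝ) :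
    (Fin N → Fin M) → ℝ :=
  fun d => ∑ j : ∀ i, Fin (J i), G j * ∏ i, U i (d i) (j i)

theorem MvPolynomial.volume_setOf_eval_eq_zero {n : ℕ} (P : MvPolynomial (Fin n) ℝ)
    (hP : P ≠ 0) : volume {x : Fin n → ℝ | eval x P = 0} = 0 := by
  induction n with
  | zero =>
    obtain ⟨c, rfl⟩ := C_surjective (Fin 0) P
    simp_all
  | succ n ih =>
    set Q := finSuccEquiv ℝ n P
    have hQ : Q ≠ 0 := by simpa [Q] using hP
    have hZ : MeasurableSet {x : Fin (n + 1) → ℝ | eval x P = 0} :=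
      measurableSet_eq_fun (continuous_eval P).measurable measurable_const
    let e := MeasurableEquiv.piFinSuccAbove (fun _ : Fin (n + 1) => ℝ) 0
    have hslice : ∀ᵐ x : Fin n → ℝ,
        volume ((·, x) ⁻¹' (e.symm ⁻¹' {x | eval x P = 0})) = 0 := by
      have hlc : ∀ᵐ x : Fin n → ℝ, eval x Q.leadingCoeff ≠ 0 := by
        simpa [ae_iff] using ih _ (Polynomial.leadingCoeff_ne_zero.mpr hQ)
      filter_upwards [hlc] with x hx
      have hmap : Q.map (eval x) ≠ 0 := fun h => hx <| by
        rw [Polynomial.leadingCoeff, ← Polynomial.coeff_map, h, Polynomial.coeff_zero]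
      refine Set.Finite.measure_zero ?_ _
      convert Polynomial.finite_setOfPred_isRoot hmap using 1
      ext y
      simp [e, Q, ← eval_eq_eval_mv_eval', Fin.consEquiv]
    rw [← (volume_preserving_piFinSuccAbove _ 0).symm.measure_preimage hZ.nullMeasurableSet,
      Measure.volume_eq_prod, Measure.prod_apply_symm (e.symm.measurable hZ)]
    exact lintegral_eq_zero_of_ae_eq_zero hslice

theorem MvPolynomial.addHaar_setOf_eval_eq_zero {ι E : Type*} [Fintype ι]
    [NormedAddCommGroup E] [NormedSpace ℝ E] [FiniteDimensional ℝ E] [MeasurableSpace E]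
    [BorelSpace E] (μ : Measure E) [μ.IsAddHaarMeasure] (c : E ≃ₗ[ℝ] (ι → ℝ))
    {P : MvPolynomial ι ℝ} (hP : P ≠ 0) : μ {x | eval (c x) P = 0} = 0 := by
  let σ := Fintype.equivFin ι
  let c' := (c.trans (LinearEquiv.funCongrLeft ℝ ℝ σ.symm)).toContinuousLinearEquiv
  have hset : {x | eval (c x) P = 0} = c' ⁻¹' {y | eval y (rename σ P) = 0} := by
    ext x
    simp [c', eval_rename, Function.comp_def]
  have hμ : μ ≪ (volume : Measure (Fin _ → ℝ)).map c'.symm :=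
    Measure.absolutelyContinuous_isAddHaarMeasure _ _
  refine hμ ?_
  have hZ : MeasurableSet {y : Fin _ → ℝ | eval y (rename σ P) = 0} :=
    measurableSet_eq_fun (continuous_eval _).measurable measurable_const
  rw [hset, Measure.map_apply c'.symm.continuous.measurable (c'.continuous.measurable hZ)]
  simpa using volume_setOf_eval_eq_zero _ ((rename_injective σ σ.injective).ne hP)

theorem isCPRepr_card {N M : ℕ} (A : (Fin N → Fin M) → ℝ) :
    IsCPRepr A (Fintype.card (Fin N → Fin M)) := by
  let e := (Fintype.equivFin (Fin N → Fin M)).symm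
  refine ⟨fun z => A (e z), fun z i m => if e z i = m then 1 else 0, fun d => ?_⟩
  simp [Finset.prod_boole, ← funext_iff, e.sum_comp (fun u => if u = d then A u else 0)]

theorem isCPRepr_cpRank {N M : ℕ} (A : (Fin N → Fin M) → ℝ) : IsCPRepr A (cpRank A) :=
  Nat.sInf_mem (s := {Z | IsCPRepr A Z}) ⟨_, isCPRepr_card A⟩

def flattening {N M : ℕ} (p : Fin N → Prop) [DecidablePred p] (A : (Fin N → Fin M) → ℝ) :
    Matrix ({i // p i} → Fin M) ({i // ¬p i} → Fin M) ℝ :=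
  Matrix.of fun a b => A ((Equiv.piEquivPiSubtypeProd p fun _ => Fin M).symm (a, b))

theorem IsCPRepr.rank_flattening_le {N M Z : ℕ} {A : (Fin N → Fin M) → ℝ} (h : IsCPRepr A Z)
    (p : Fin N → Prop) [DecidablePred p] : (flattening p A).rank ≤ Z := by
  obtain ⟨lam, a, ha⟩ := h
  let B : Matrix ({i // p i} → Fin M) (Fin Z) ℝ :=
    Matrix.of fun b z => lam z * ∏ i : {i // p i}, a z i (b i)
  let C : Matrix (Fin Z) ({i // ¬p i} → Fin M) ℝ :=
    Matrix.of fun z c => ∏ i : {i // ¬p i}, a z i (c i)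
  have hBC : flattening p A = B * C := by
    ext b c
    simp only [flattening, B, C, Matrix.of_apply, Matrix.mul_apply, ha, mul_assoc,
      ← Fintype.prod_subtype_mul_prod_subtype p]
    refine Finset.sum_congr rfl fun z _ => ?_
    congr 2 <;> refine Finset.prod_congr rfl fun i _ => ?_ <;> simp [i.2]
  calc (flattening p A).rank = (B * C).rank := by rw [hBC]
    _ ≤ B.rank := Matrix.rank_mul_le_left B C
    _ ≤ Fintype.card (Fin Z) := Matrix.rank_le_card_width B
    _ = Z := Fintype.card_fin Z

theorem det_submatrix_flattening_eq_zero {N M r : ℕ} {A : (Fin N → Fin M) → ℝ}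
    (hA : cpRank A < r) (p : Fin N → Prop) [DecidablePred p]
    (f : Fin r → {i // p i} → Fin M) (g : Fin r → {i // ¬p i} → Fin M) :
    ((flattening p A).submatrix f g).det = 0 := by
  by_contra hdet
  have hunit := (Matrix.isUnit_iff_isUnit_det _).mpr (isUnit_iff_ne_zero.mpr hdet)
  have : r ≤ cpRank A := calc
    r = ((flattening p A).submatrix f g).rank := by
      rw [Matrix.rank_of_isUnit _ hunit, Fintype.card_fin]
    _ ≤ (flattening p A).rank := Matrix.rank_submatrix_le _ _ _
    _ ≤ cpRank A := (isCPRepr_cpRank A).rank_flattening_le p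
  omega

abbrev TuckerParams (N M : ℕ) (J : Fin N → ℕ) :=
  ((∀ i, Fin (J i)) → ℝ) × (∀ i : Fin N, Fin M → Fin (J i) → ℝ)

abbrev TuckerVar (N M : ℕ) (J : Fin N → ℕ) :=
  (∀ i, Fin (J i)) ⊕ (Σ i : Fin N, Fin M × Fin (J i))

def tuckerCoords (N M : ℕ) (J : Fin N → ℕ) :
    TuckerParams N M J ≃ₗ[ℝ] (TuckerVar N M J → ℝ) where
  toFun x
    | .inl j => x.1 j
    | .inr ⟨i, m, j⟩ => x.2 i m j
  invFun v := (fun j => v (.inl j), fun i m j => v (.inr ⟨i, m, j⟩))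
  map_add' _ _ := by ext (_ | _) <;> rfl
  map_smul' _ _ := by ext (_ | _) <;> rfl
  left_inv _ := rfl
  right_inv _ := by ext (_ | _) <;> rfl

open MvPolynomial in
noncomputable def tuckerPoly {N M : ℕ} (J : Fin N → ℕ) (d : Fin N → Fin M) :
    MvPolynomial (TuckerVar N M J) ℝ :=
  ∑ j : ∀ i, Fin (J i), X (.inl j) * ∏ i, X (.inr ⟨i, d i, j i⟩)

theorem eval_tuckerPoly {N M : ℕ} (J : Fin N → ℕ) (x : TuckerParams N M J) (d : Fin N → Fin M) :
    MvPolynomial.eval (tuckerCoords N M J x) (tuckerPoly J d) = tuckerTensor J x.1 x.2 d := by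
  simp [tuckerPoly, tuckerTensor, tuckerCoords]

theorem tuckerTensor_castLE {N M : ℕ} {J : Fin N → ℕ} (hJM : ∀ i, J i ≤ M)
    (G : (∀ i, Fin (J i)) → ℝ) (j : ∀ i, Fin (J i)) :
    tuckerTensor J G (fun _ m k => if (m : ℕ) = k then 1 else 0)
      (fun i => Fin.castLE (hJM i) (j i)) = G j := by
  simp [tuckerTensor, Finset.prod_boole, Fin.val_eq_val, ← funext_iff]

instance (N M : ℕ) (J : Fin N → ℕ) :
    (volume : Measure (TuckerParams N M J)).IsAddHaarMeasure :=
  have (i : Fin N) : (volume : Measure (Fin M → Fin (J i) → ℝ)).IsAddHaarMeasure :=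
    Measure.pi.isAddHaarMeasure _
  have : (volume : Measure (∀ i : Fin N, Fin M → Fin (J i) → ℝ)).IsAddHaarMeasure :=
    Measure.pi.isAddHaarMeasure _
  Measure.prod.instIsAddHaarMeasure _ _

theorem volume_setOf_cpRank_tuckerTensor_lt {N M : ℕ} {J : Fin N → ℕ} (hJM : ∀ i, J i ≤ M)
    (p : Fin N → Prop) [DecidablePred p] :
    volume {x : TuckerParams N M J | cpRank (tuckerTensor J x.1 x.2) <
      min (∏ i : {i // p i}, J i) (∏ i : {i // ¬p i}, J i)} = 0 := by
  set r := min (∏ i : {i // p i}, J i) (∏ i : {i // ¬p i}, J i)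
  obtain ⟨φ⟩ : Nonempty (Fin r ↪ ∀ i : {i // p i}, Fin (J i)) :=
    Function.Embedding.nonempty_of_card_le (by simp [r])
  obtain ⟨ψ⟩ : Nonempty (Fin r ↪ ∀ i : {i // ¬p i}, Fin (J i)) :=
    Function.Embedding.nonempty_of_card_le (by simp [r])
  let merge := (Equiv.piEquivPiSubtypeProd p fun i => Fin (J i)).symm
  let rows : Fin r → {i // p i} → Fin M := fun k i => Fin.castLE (hJM i) (φ k i)
  let cols : Fin r → {i // ¬p i} → Fin M := fun l i => Fin.castLE (hJM i) (ψ l i)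
  let minor (x : TuckerParams N M J) :=
    (flattening p (tuckerTensor J x.1 x.2)).submatrix rows cols
  let D : MvPolynomial (TuckerVar N M J) ℝ := (Matrix.of fun k l =>
    tuckerPoly J ((Equiv.piEquivPiSubtypeProd p fun _ => Fin M).symm (rows k, cols l))).det
  have heval (x : TuckerParams N M J) :
      MvPolynomial.eval (tuckerCoords N M J x) D = (minor x).det := by
    rw [RingHom.map_det]
    congr 1
    ext k l
    simp [minor, flattening, eval_tuckerPoly]
  let G₀ : (∀ i, Fin (J i)) → ℝ := fun j => if ∃ k, merge (φ k, ψ k) = j then 1 else 0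
  let U₀ : ∀ i : Fin N, Fin M → Fin (J i) → ℝ := fun _ m k => if (m : ℕ) = k then 1 else 0
  have hminor : minor (G₀, U₀) = 1 := by
    ext k l
    have : (Equiv.piEquivPiSubtypeProd p fun _ => Fin M).symm (rows k, cols l) =
        fun i => Fin.castLE (hJM i) (merge (φ k, ψ l) i) := by
      funext i
      by_cases hi : p i <;> simp [hi, rows, cols, merge]
    simp [minor, flattening, this, U₀, tuckerTensor_castLE, G₀, Matrix.one_apply]
  have hD_ne : D ≠ 0 := fun h => by simpa [h, hminor] using heval (G₀, U₀)
  refine measure_mono_null (fun x hx => ?_)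
    (MvPolynomial.addHaar_setOf_eval_eq_zero volume (tuckerCoords N M J) hD_ne)
  show MvPolynomial.eval _ D = 0
  rw [heval]
  exact det_submatrix_flattening_eq_zero hx p rows cols

theorem tucker_cpRank_lower_bound_ae_general
    (N M : ℕ) (J : Fin N → ℕ)
    (hJM : ∀ i, J i ≤ M)
    (r : ℕ)
    (hr : r = (Finset.univ.filter
        (fun s : Finset (Fin N) => s.Nonempty ∧ s ≠ Finset.univ)).sup
        (fun s => min (∏ i ∈ s, J i) (∏ i ∈ sᶜ, J i))) :
    volume {x : ((∀ i, Fin (J i)) → ℝ) × (∀ i : Fin N, Fin M → Fin (J i) → ℝ) |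
      cpRank (tuckerTensor J x.1 x.2) < r} = 0 := by
  refine measure_mono_null (fun x hx => ?_)
    (measure_iUnion_null fun s : Finset (Fin N) => volume_setOf_cpRank_tuckerTensor_lt hJM (· ∈ s))
  rw [Set.mem_ofPred_eq, hr, Finset.lt_sup_iff] at hx
  obtain ⟨s, -, hs⟩ := hx
  refine Set.mem_iUnion.mpr ⟨s, ?_⟩
  rwa [Finset.prod_subtype s (fun _ => Iff.rfl), Finset.prod_subtype sᶜ (fun _ => mem_compl)] at hs

/-- For Lebesgue-almost every choice of Tucker parameters (core `G` and factor matrices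
`U i ∈ ℝ^{M × J i}`), the resulting tensor has CP rank at least
`r = max over nonempty proper subsets p ⊆ {1,…,N} of min (∏_{i∈p} J i) (∏_{i∉p} J i)`:
the set of parameters giving CP rank `< r` has Lebesgue measure zero. -/
theorem tucker_cpRank_lower_bound_ae
    (N M : ℕ) (hN : 2 ≤ N) (hM : 1 ≤ M) (J : Fin N → ℕ)
    (hJpos : ∀ i, 1 ≤ J i) (hJM : ∀ i, J i ≤ M)
    (r : ℕ)
    (hr : r = (Finset.univ.filter
        (fun s : Finset (Fin N) => s.Nonempty ∧ s ≠ Finset.univ)).sup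
        (fun s => min (∏ i ∈ s, J i) (∏ i ∈ sᶜ, J i))) :
    volume {x : ((∀ i, Fin (J i)) → ℝ) × (∀ i : Fin N, Fin M → Fin (J i) → ℝ) |
      cpRank (tuckerTensor J x.1 x.2) < r} = 0 :=
  tucker_cpRank_lower_bound_ae_general N M J hJM r hr
end

section
/- Let A be an order-N tensor of dimension M in each mode in Tucker format A = G ×_1 U^(1) ×_2 ⋯ ×_N U^(N), with core G ∈ ℝ^{J_1 × ⋯ × J_N} and factor matrices U^(i) ∈ ℝ^{M × J_i}. Then for any partition of {1,…,N} into p = {p_1,…,p_{n_1}} and q = {q_1,…,q_{n_2}}, the matricization satisfies [A]^{(p,q)} = (U^(p_1) ⊗ U^(p_2) ⊗ ⋯ ⊗ U^(p_{n_1})) · [G]^{(p,q)} · (U^(q_{n_2}) ⊗ U^(q_{n_2−1}) ⊗ ⋯ ⊗ U^(q_1))ᵀ, where ⊗ denotes the Kronecker product of matrices. -/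
open Finset

/-- The `(p,q)`-matricization of an order-`N` tensor `A` of dimension `M` in each mode,
where the partition of the modes into `p = (p_1,…,p_{n₁})` and `q = (q_1,…,q_{n₂})` is
encoded by an equivalence `e : Fin n₁ ⊕ Fin n₂ ≃ Fin N` (`p k = e (inl k)`,
`q k = e (inr k)`). Rows are indexed by multi-indices over the `p`-modes, columns by
multi-indices over the `q`-modes. -/
def tensorMatricize {N n₁ n₂ M : ℕ} (A : (Fin N → Fin M) → ℝ)
    (e : Fin n₁ ⊕ Fin n₂ ≃ Fin N) :
    Matrix (Fin n₁ → Fin M) (Fin n₂ → Fin M) ℝ :=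
  Matrix.of fun f g => A (fun i => Sum.elim f g (e.symm i))

/-- The `(p,q)`-matricization of the core tensor `G ∈ ℝ^{J 1 × ⋯ × J N}`. -/
def coreMatricize {N n₁ n₂ : ℕ} (J : Fin N → ℕ)
    (G : (∀ i, Fin (J i)) → ℝ) (e : Fin n₁ ⊕ Fin n₂ ≃ Fin N) :
    Matrix (∀ k, Fin (J (e (Sum.inl k)))) (∀ k, Fin (J (e (Sum.inr k)))) ℝ :=
  Matrix.of fun f g => G (fun i =>
    Fin.cast (congrArg J (e.apply_symm_apply i))
      (Sum.rec (motive := fun s => Fin (J (e s))) f g (e.symm i)))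

/-- The Kronecker product `U (p 1) ⊗ U (p 2) ⊗ ⋯ ⊗ U (p n)` of the matrices
`U k ∈ ℝ^{M × J k}`, written with its rows indexed by multi-indices `Fin n → Fin M`
and its columns indexed by multi-indices `∀ k, Fin (J k)` (the lexicographic
identification of these index sets with `Fin (M^n)` and `Fin (∏ J k)` recovers the
usual flattened Kronecker product). -/
def piKron {n M : ℕ} {J : Fin n → ℕ} (U : ∀ k, Fin M → Fin (J k) → ℝ) :
    Matrix (Fin n → Fin M) (∀ k, Fin (J k)) ℝ :=
  Matrix.of fun f j => ∏ k, U k (f k) (j k)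

lemma cast_apply {N : ℕ} (J : Fin N → ℕ) (j : ∀ i, Fin (J i)) {a b : Fin N} (h : a = b) :
    Fin.cast (congrArg J h) (j a) = j b := by subst h; rfl

def splitEquiv {N n₁ n₂ : ℕ} (J : Fin N → ℕ) (e : Fin n₁ ⊕ Fin n₂ ≃ Fin N) :
    (∀ i, Fin (J i)) ≃ ((∀ k, Fin (J (e (Sum.inl k)))) × (∀ k, Fin (J (e (Sum.inr k))))) where
  toFun j := (fun k => j (e (Sum.inl k)), fun k => j (e (Sum.inr k)))
  invFun x i := Fin.cast (congrArg J (e.apply_symm_apply i))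
      (Sum.rec (motive := fun s => Fin (J (e s))) x.1 x.2 (e.symm i))
  left_inv j := by
    funext i
    dsimp only
    rw [show (Sum.rec (motive := fun s => Fin (J (e s)))
        (fun k => j (e (Sum.inl k))) (fun k => j (e (Sum.inr k))) (e.symm i)) = j (e (e.symm i))
      from by rcases e.symm i with k | k <;> rfl]
    exact cast_apply J j (e.apply_symm_apply i)
  right_inv x := by
    have key : ∀ s : Fin n₁ ⊕ Fin n₂,
        Fin.cast (congrArg J (e.apply_symm_apply (e s)))
          (Sum.rec (motive := fun s => Fin (J (e s))) x.1 x.2 (e.symm (e s))) =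
        Sum.rec (motive := fun s => Fin (J (e s))) x.1 x.2 s := by
      intro s
      apply Fin.ext
      simp only [Fin.coe_cast]
      rw [e.symm_apply_apply]
    exact Prod.ext (funext fun k => key (Sum.inl k)) (funext fun k => key (Sum.inr k))

/-- For a tensor `A` in Tucker format with core `G` and factor matrices `U i`, and any
partition of the modes into `p = (p_1,…,p_{n₁})` and `q = (q_1,…,q_{n₂})`, the
matricization satisfies
`[A]^{(p,q)} = (U^{(p₁)} ⊗ ⋯ ⊗ U^{(p_{n₁})}) [G]^{(p,q)} (U^{(q_{n₂})} ⊗ ⋯ ⊗ U^{(q₁)})ᵀ`. -/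
theorem tucker_matricize_eq_kron_mul_kron
    (N n₁ n₂ M : ℕ) (J : Fin N → ℕ)
    (G : (∀ i, Fin (J i)) → ℝ) (U : ∀ i : Fin N, Fin M → Fin (J i) → ℝ)
    (A : (Fin N → Fin M) → ℝ)
    (hA : ∀ d : Fin N → Fin M,
      A d = ∑ j : ∀ i, Fin (J i), G j * ∏ i, U i (d i) (j i))
    (e : Fin n₁ ⊕ Fin n₂ ≃ Fin N) :
    tensorMatricize A e =
      piKron (fun k => U (e (Sum.inl k))) * coreMatricize J G e *
        (piKron (fun k => U (e (Sum.inr k)))).transpose := by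
  ext f g
  show A (fun i => Sum.elim f g (e.symm i)) = _
  rw [hA]
  simp only [Matrix.mul_apply, Matrix.transpose_apply, piKron, Matrix.of_apply,
    Finset.sum_mul]
  rw [Finset.sum_comm]
  refine Eq.trans (Fintype.sum_equiv (splitEquiv J e) _
    (fun x => (∏ k, U (e (Sum.inl k)) (f k) (x.1 k)) * coreMatricize J G e x.1 x.2 *
      ∏ k, U (e (Sum.inr k)) (g k) (x.2 k)) ?_) (Fintype.sum_prod_type _)
  intro j
  have hcore : coreMatricize J G e (fun k => j (e (Sum.inl k))) (fun k => j (e (Sum.inr k)))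
      = G j := congrArg G ((splitEquiv J e).left_inv j)
  have hprod : ∏ i, U i (Sum.elim f g (e.symm i)) (j i)
      = (∏ k, U (e (Sum.inl k)) (f k) (j (e (Sum.inl k)))) *
        ∏ k, U (e (Sum.inr k)) (g k) (j (e (Sum.inr k))) := by
    rw [← Equiv.prod_comp e (fun i => U i (Sum.elim f g (e.symm i)) (j i)),
      Fintype.prod_sum_type]
    simp
  rw [hprod]
  dsimp only [splitEquiv, Equiv.coe_fn_mk]
  rw [hcore]
  ring
end

section
/- Let A be an order-N tensor of dimension M in each mode in Tucker format A = G ×_1 U^(1) ×_2 ⋯ ×_N U^(N), with core G ∈ ℝ^{J_1 × ⋯ × J_N} and factor matrices U^(i) ∈ ℝ^{M × J_i}. If every factor matrix U^(i) has full column rank J_i, then for any partition of {1,…,N} into p and q, the matrix rank of [A]^{(p,q)} equals the matrix rank of [G]^{(p,q)}. -/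
open Finset

open Matrix

-- left inverse from full column rank
lemma leftInv_of_rank {m J : ℕ} (U : Matrix (Fin m) (Fin J) ℝ) (h : U.rank = J) :
    ∃ V : Matrix (Fin J) (Fin m) ℝ, V * U = 1 := by
  have hker : LinearMap.ker U.mulVecLin = ⊥ := by
    have h1 := LinearMap.finrank_range_add_finrank_ker U.mulVecLin
    rw [show Module.finrank ℝ (LinearMap.range U.mulVecLin) = J from h, Module.finrank_pi] at h1
    simp only [Fintype.card_fin] at h1
    have : Module.finrank ℝ (LinearMap.ker U.mulVecLin) = 0 := by omega
    exact Submodule.finrank_eq_zero.mp this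
  obtain ⟨g, hg⟩ := U.mulVecLin.exists_leftInverse_of_injective hker
  refine ⟨LinearMap.toMatrix' g, ?_⟩
  apply Matrix.toLin'.injective
  rw [Matrix.toLin'_mul, Matrix.toLin'_toMatrix']
  rw [show Matrix.toLin' U = U.mulVecLin from rfl, hg, Matrix.toLin'_one]


lemma rank_mul_left_eq {a b c : Type*} [Fintype a] [Fintype b] [Fintype c] [DecidableEq b]
    (P : Matrix a b ℝ) (V : Matrix b a ℝ) (hV : V * P = 1) (X : Matrix b c ℝ) :
    (P * X).rank = X.rank := by
  refine le_antisymm (Matrix.rank_mul_le_right _ _) ?_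
  calc X.rank = ((V * P) * X).rank := by rw [hV, Matrix.one_mul]
    _ = (V * (P * X)).rank := by rw [Matrix.mul_assoc]
    _ ≤ (P * X).rank := Matrix.rank_mul_le_right _ _

lemma rank_mul_right_eq {a b c : Type*} [Fintype a] [Fintype b] [Fintype c] [DecidableEq b]
    (Q : Matrix a b ℝ) (V : Matrix b a ℝ) (hV : V * Q = 1) (X : Matrix c b ℝ) :
    (X * Qᵀ).rank = X.rank := by
  rw [← Matrix.rank_transpose (X * Qᵀ), Matrix.transpose_mul, Matrix.transpose_transpose,
    rank_mul_left_eq Q V hV Xᵀ, Matrix.rank_transpose]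

-- Kronecker-type product of matrices multiplies entrywise
lemma kron_mul_kron {κ α : Type*} [Fintype κ] [DecidableEq κ] [Fintype α] {β γ : κ → Type*}
    [∀ k, Fintype (β k)] [∀ k, Fintype (γ k)]
    (V : ∀ k, Matrix (γ k) α ℝ) (W : ∀ k, α → β k → ℝ) :
    (Matrix.of fun (j : ∀ k, γ k) (f : κ → α) => ∏ k, V k (j k) (f k)) *
      (Matrix.of fun (f : κ → α) (j' : ∀ k, β k) => ∏ k, W k (f k) (j' k)) =
    Matrix.of fun j j' => ∏ k, (V k * Matrix.of (W k)) (j k) (j' k) := by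
  ext j j'
  simp only [Matrix.mul_apply, Matrix.of_apply]
  rw [Fintype.prod_sum]
  exact Finset.sum_congr rfl fun x _ => (Finset.prod_mul_distrib).symm

lemma kron_one {κ : Type*} [Fintype κ] {β : κ → Type*} [∀ k, Fintype (β k)]
    [∀ k, DecidableEq (β k)] :
    (Matrix.of fun (j j' : ∀ k, β k) => ∏ k, (1 : Matrix (β k) (β k) ℝ) (j k) (j' k)) = 1 := by
  ext j j'
  simp only [Matrix.of_apply, Matrix.one_apply]
  by_cases h : j = j'
  · subst h; simp
  · rw [if_neg h]
    obtain ⟨k, hk⟩ := Function.ne_iff.mp h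
    exact Finset.prod_eq_zero (Finset.mem_univ k) (if_neg hk)

section Pack
variable {N n₁ n₂ : ℕ} (J : Fin N → ℕ) (e : Fin n₁ ⊕ Fin n₂ ≃ Fin N)

def packFun (p : (∀ k, Fin (J (e (Sum.inl k)))) × (∀ k, Fin (J (e (Sum.inr k)))))
    (i : Fin N) : Fin (J i) :=
  Fin.cast (congrArg J (e.apply_symm_apply i))
    (Sum.rec (motive := fun s => Fin (J (e s))) p.1 p.2 (e.symm i))

lemma packFun_apply (p : (∀ k, Fin (J (e (Sum.inl k)))) × (∀ k, Fin (J (e (Sum.inr k)))))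
    (s : Fin n₁ ⊕ Fin n₂) :
    packFun J e p (e s) = Sum.rec (motive := fun s => Fin (J (e s))) p.1 p.2 s := by
  apply Fin.ext
  rw [packFun, Fin.coe_cast]
  exact congrArg (fun t => ((Sum.rec (motive := fun s => Fin (J (e s))) p.1 p.2 t : Fin (J (e t))) : ℕ))
    (e.symm_apply_apply s)

def packEquiv : ((∀ k, Fin (J (e (Sum.inl k)))) × (∀ k, Fin (J (e (Sum.inr k))))) ≃
    (∀ i, Fin (J i)) where
  toFun := packFun J e
  invFun j := (fun k => j (e (Sum.inl k)), fun k => j (e (Sum.inr k)))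
  left_inv p := by
    ext k
    · exact congrArg Fin.val (packFun_apply J e p (Sum.inl k))
    · exact congrArg Fin.val (packFun_apply J e p (Sum.inr k))
  right_inv j := by
    funext i
    apply Fin.ext
    rw [packFun, Fin.coe_cast]
    have h1 : ∀ s : Fin n₁ ⊕ Fin n₂,
        ((Sum.rec (motive := fun s => Fin (J (e s)))
          (fun k => j (e (Sum.inl k))) (fun k => j (e (Sum.inr k))) s : Fin (J (e s))) : ℕ)
        = ((j (e s) : Fin (J (e s))) : ℕ) := by rintro (k | k) <;> rfl
    rw [h1 (e.symm i)]
    exact congrArg (fun t => ((j t : Fin (J t)) : ℕ)) (e.apply_symm_apply i)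
end Pack

section Factor
variable {N n₁ n₂ M : ℕ} {J : Fin N → ℕ}
  (G : (∀ i, Fin (J i)) → ℝ) (U : ∀ i : Fin N, Fin M → Fin (J i) → ℝ)
  (e : Fin n₁ ⊕ Fin n₂ ≃ Fin N)

lemma tucker_factorization
    (A : (Fin N → Fin M) → ℝ)
    (hA : ∀ d : Fin N → Fin M,
      A d = ∑ j : ∀ i, Fin (J i), G j * ∏ i, U i (d i) (j i)) :
    tensorMatricize A e =
      (Matrix.of fun (f : Fin n₁ → Fin M) (jp : ∀ k, Fin (J (e (Sum.inl k)))) =>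
          ∏ k, U (e (Sum.inl k)) (f k) (jp k)) *
        coreMatricize J G e *
      (Matrix.of fun (g : Fin n₂ → Fin M) (jq : ∀ k, Fin (J (e (Sum.inr k)))) =>
          ∏ k, U (e (Sum.inr k)) (g k) (jq k))ᵀ := by
  ext f g
  rw [tensorMatricize, Matrix.of_apply, hA]
  rw [← Equiv.sum_comp (packEquiv J e)]
  rw [Fintype.sum_prod_type]
  simp only [Matrix.mul_apply, Matrix.transpose_apply, Matrix.of_apply]
  rw [Finset.sum_comm]
  refine Finset.sum_congr rfl fun jq _ => ?_
  rw [Finset.sum_mul]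
  refine Finset.sum_congr rfl fun jp _ => ?_
  have hG : G (packEquiv J e (jp, jq)) = coreMatricize J G e jp jq := rfl
  have hprod : (∏ i, U i (Sum.elim f g (e.symm i)) (packEquiv J e (jp, jq) i)) =
      (∏ k, U (e (Sum.inl k)) (f k) (jp k)) * ∏ k, U (e (Sum.inr k)) (g k) (jq k) := by
    rw [← Equiv.prod_comp e fun i => U i (Sum.elim f g (e.symm i)) (packEquiv J e (jp, jq) i)]
    rw [Fintype.prod_sum_type]
    congr 1
    · refine Finset.prod_congr rfl fun k _ => ?_
      have h1 := packFun_apply J e (jp, jq) (Sum.inl k)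
      have h2 : e.symm (e (Sum.inl k)) = Sum.inl k := e.symm_apply_apply _
      simp only [packEquiv, Equiv.coe_fn_mk, h1, h2, Sum.elim_inl]
    · refine Finset.prod_congr rfl fun k _ => ?_
      have h1 := packFun_apply J e (jp, jq) (Sum.inr k)
      have h2 : e.symm (e (Sum.inr k)) = Sum.inr k := e.symm_apply_apply _
      simp only [packEquiv, Equiv.coe_fn_mk, h1, h2, Sum.elim_inr]
  rw [hG, hprod]
  ring
end Factor

/-- If `A` is in Tucker format with core `G` and factor matrices `U i ∈ ℝ^{M × J i}`
all of full column rank, then for any partition of the modes into `p` and `q`,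
the matrix rank of `[A]^{(p,q)}` equals the matrix rank of `[G]^{(p,q)}`. -/
theorem tucker_matricize_rank_eq_core_rank
    (N n₁ n₂ M : ℕ) (J : Fin N → ℕ)
    (G : (∀ i, Fin (J i)) → ℝ) (U : ∀ i : Fin N, Fin M → Fin (J i) → ℝ)
    (A : (Fin N → Fin M) → ℝ)
    (hA : ∀ d : Fin N → Fin M,
      A d = ∑ j : ∀ i, Fin (J i), G j * ∏ i, U i (d i) (j i))
    (hU : ∀ i, (Matrix.of (U i)).rank = J i)
    (e : Fin n₁ ⊕ Fin n₂ ≃ Fin N) :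
    (tensorMatricize A e).rank = (coreMatricize J G e).rank := by
  choose V hV using fun i => leftInv_of_rank (Matrix.of (U i)) (hU i)
  set P : Matrix (Fin n₁ → Fin M) (∀ k, Fin (J (e (Sum.inl k)))) ℝ :=
    Matrix.of fun f jp => ∏ k, U (e (Sum.inl k)) (f k) (jp k) with hP
  set Q : Matrix (Fin n₂ → Fin M) (∀ k, Fin (J (e (Sum.inr k)))) ℝ :=
    Matrix.of fun g jq => ∏ k, U (e (Sum.inr k)) (g k) (jq k) with hQ
  have hVP : (Matrix.of fun (jp : ∀ k, Fin (J (e (Sum.inl k)))) (f : Fin n₁ → Fin M) =>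
      ∏ k, V (e (Sum.inl k)) (jp k) (f k)) * P = 1 := by
    rw [hP, kron_mul_kron (fun k => V (e (Sum.inl k))) (fun k => U (e (Sum.inl k)))]
    simp only [hV]
    exact kron_one
  have hVQ : (Matrix.of fun (jq : ∀ k, Fin (J (e (Sum.inr k)))) (g : Fin n₂ → Fin M) =>
      ∏ k, V (e (Sum.inr k)) (jq k) (g k)) * Q = 1 := by
    rw [hQ, kron_mul_kron (fun k => V (e (Sum.inr k))) (fun k => U (e (Sum.inr k)))]
    simp only [hV]
    exact kron_one
  rw [tucker_factorization G U e A hA, rank_mul_right_eq Q _ hVQ, rank_mul_left_eq P _ hVP]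
end
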